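/- For every sufficiently small θ > 0 there exist C₁ > 0 and N ∈ ℕ such that for every n > N, every β ∈ [−∞, 0], and every environment configuration η : ℕ×ℤ^d → {0,1} (with ω = {(k,x) : η(k,x)=0}), one has Z_n(ω) − Z̃_n(ω) ≤ exp(−C₁·n^{1+2αθ}), where Z̃_n(ω) is the partition function restricted to paths γ with Σ_{i=1}^n |γ(i)−γ(i−1)|₁^α ≤ n^{1+2αθ}. -/

import Mathlib

/-!
The Boltzmann weight `exp(-c E(γ))` of a lattice path factorises over its increments, so summing
it over all paths of length `n` gives at most `S(c)^n`, where `S(c) = ∑_{y ∈ ℤᵈ} exp(-c |y|₁^α)` is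
finite. The environment factor is at most `1`, so the paths with energy `E > K` contribute at most
`c₁^n e^{-c₂K/2} ∑_γ e^{-c₂E(γ)/2} ≤ (c₁ S(c₂/2))^n e^{-c₂K/2}`; for the superlinear cutoff
`K = n^{1+2αθ}` this is below `e^{-c₂K/4}` once `n` is large.
-/

open MeasureTheory ProbabilityTheory Filter Set

noncomputable section

namespace DPRE

/-- The environment: a Bernoulli field indexed by `ℕ × ℤᵈ` (`true` means `η = 1`). -/
abbrev Env (d : ℕ) := ℕ × (Fin d → ℤ) → Bool

/-- `Q` is the law of an i.i.d. Bernoulli(p) field. -/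
def IsBernoulliEnv {d : ℕ} (Q : Measure (Env d)) (p : ℝ) : Prop :=
  IsProbabilityMeasure Q ∧
  iIndepFun (fun i (η : Env d) => η i) Q ∧
  ∀ i : ℕ × (Fin d → ℤ), Q {η | η i = true} = ENNReal.ofReal p

/-- The ℓ¹-norm on `ℝᵈ`. -/
def l1 {d : ℕ} (x : Fin d → ℝ) : ℝ := ∑ j, |x j|

/-- The FPP-type energy `∑_{i=1}^n |γ(i) − γ(i−1)|₁^α` of a path `γ : ℕ → ℝᵈ`. -/
def energyR {d : ℕ} (α : ℝ) (n : ℕ) (γ : ℕ → (Fin d → ℝ)) : ℝ :=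
  ∑ i ∈ Finset.Icc 1 n, (l1 (γ i - γ (i - 1))) ^ α

open Classical in
/-- The number of indices `1 ≤ i ≤ n` with `(i, γ(i)) ∉ ω`. -/
def obstacleCount {d : ℕ} (n : ℕ) (ω : Set (ℕ × (Fin d → ℝ)))
    (γ : ℕ → (Fin d → ℝ)) : ℕ :=
  ∑ i ∈ Finset.Icc 1 n, (if (i, γ i) ∈ ω then 0 else 1)

/-- Paths of length `n` with values in `S ⊂ ℝᵈ`, starting at the origin (coordinates
beyond `n` are normalized to `0`). -/
def PathR (d : ℕ) (S : Set (Fin d → ℝ)) (n : ℕ) :=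
  {g : ℕ → (Fin d → ℝ) // g 0 = 0 ∧ (∀ i ∈ Finset.Icc 1 n, g i ∈ S) ∧
    ∀ i, n < i → g i = 0}

/-- The partition function
`Z_n(ω) = c₁^n ∑_γ exp(β·#{i : (i,γ(i)) ∉ ω} − c₂ ∑ |Δγ(i)|₁^α)`,
the sum being over paths with values in `S`. -/
def ZR {d : ℕ} (α c₁ c₂ β : ℝ) (n : ℕ) (S : Set (Fin d → ℝ))
    (ω : Set (ℕ × (Fin d → ℝ))) : ℝ :=
  c₁ ^ n * ∑' g : PathR d S n,
    Real.exp (β * (obstacleCount n ω g.1 : ℝ) - c₂ * energyR α n g.1)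

/-- The zero-temperature (`β = −∞`) partition function: only paths avoiding all
obstacles contribute. -/
def ZRneg {d : ℕ} (α c₁ c₂ : ℝ) (n : ℕ) (S : Set (Fin d → ℝ))
    (ω : Set (ℕ × (Fin d → ℝ))) : ℝ :=
  c₁ ^ n * ∑' g : PathR d S n,
    (if obstacleCount n ω g.1 = 0 then Real.exp (-(c₂ * energyR α n g.1)) else 0)

/-- The restricted partition function: the sum is further restricted to paths with
`∑ |Δγ(i)|₁^α ≤ K`. -/
def ZRtilde {d : ℕ} (α c₁ c₂ β : ℝ) (n : ℕ) (S : Set (Fin d → ℝ))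
    (ω : Set (ℕ × (Fin d → ℝ))) (K : ℝ) : ℝ :=
  c₁ ^ n * ∑' g : PathR d S n,
    (if energyR α n g.1 ≤ K then
      Real.exp (β * (obstacleCount n ω g.1 : ℝ) - c₂ * energyR α n g.1) else 0)

/-- The restricted zero-temperature partition function. -/
def ZRnegtilde {d : ℕ} (α c₁ c₂ : ℝ) (n : ℕ) (S : Set (Fin d → ℝ))
    (ω : Set (ℕ × (Fin d → ℝ))) (K : ℝ) : ℝ :=
  c₁ ^ n * ∑' g : PathR d S n,
    (if obstacleCount n ω g.1 = 0 ∧ energyR α n g.1 ≤ K then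
      Real.exp (-(c₂ * energyR α n g.1)) else 0)

/-- The lattice `ℤᵈ` viewed inside `ℝᵈ`. -/
def intPts (d : ℕ) : Set (Fin d → ℝ) :=
  {x | ∃ z : Fin d → ℤ, x = fun j => (z j : ℝ)}

/-- The set `ℤᵈ ∪ n^θ ℤᵈ` inside `ℝᵈ`. -/
def gridPts (d : ℕ) (θ : ℝ) (n : ℕ) : Set (Fin d → ℝ) :=
  intPts d ∪ {x | ∃ z : Fin d → ℤ, x = fun j => (n : ℝ) ^ θ * (z j : ℝ)}

/-- The obstacle-free configuration `ω = {(k,x) : η(k,x) = 0}` viewed in `ℕ × ℝᵈ`. -/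
def omegaOf {d : ℕ} (η : Env d) : Set (ℕ × (Fin d → ℝ)) :=
  {q | ∃ (k : ℕ) (x : Fin d → ℤ), η (k, x) = false ∧ q = (k, fun j => (x j : ℝ))}

/-- A subset of `ℕ × ℤᵈ` viewed in `ℕ × ℝᵈ`. -/
def embedZ {d : ℕ} (ω : Set (ℕ × (Fin d → ℤ))) : Set (ℕ × (Fin d → ℝ)) :=
  {q | ∃ (k : ℕ) (x : Fin d → ℤ), (k, x) ∈ ω ∧ q = (k, fun j => (x j : ℝ))}

/-- The augmented configuration `ω̄`: to `ω` we add the grid point `(k, x)` for every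
`(k,x) ∈ ℕ × n^θ ℤᵈ` whose box `{k} × (x + [0, n^θ)^d)` contains no point of `ω`. -/
def augment {d : ℕ} (θ : ℝ) (n : ℕ) (ω : Set (ℕ × (Fin d → ℝ))) :
    Set (ℕ × (Fin d → ℝ)) :=
  ω ∪ {q | ∃ (k : ℕ) (z : Fin d → ℤ),
        q = (k, fun j => (n : ℝ) ^ θ * (z j : ℝ)) ∧
        ∀ y : Fin d → ℝ,
          (∀ j, (n : ℝ) ^ θ * (z j : ℝ) ≤ y j ∧
                y j < (n : ℝ) ^ θ * (z j : ℝ) + (n : ℝ) ^ θ) → (k, y) ∉ ω}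


lemma l1_nonneg {d : ℕ} (x : Fin d → ℝ) : 0 ≤ l1 x :=
  Finset.sum_nonneg fun _ _ => abs_nonneg _

lemma sum_abs_rpow_le_mul_l1_rpow {d : ℕ} {α : ℝ} (hα : 0 ≤ α) (x : Fin d → ℝ) :
    ∑ j, |x j| ^ α ≤ d * l1 x ^ α := by
  calc ∑ j, |x j| ^ α ≤ ∑ _ : Fin d, l1 x ^ α :=
        Finset.sum_le_sum fun j _ => Real.rpow_le_rpow (abs_nonneg _)
          (Finset.single_le_sum (fun j _ => abs_nonneg (x j)) (Finset.mem_univ j)) hα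
    _ = d * l1 x ^ α := by simp

lemma summable_nat_exp_neg_mul_rpow {c α : ℝ} (hc : 0 < c) (hα : 0 < α) :
    Summable fun n : ℕ => Real.exp (-(c * (n : ℝ) ^ α)) := by
  refine summable_of_isBigO_nat (Real.summable_nat_rpow.mpr (by norm_num : (-2 : ℝ) < -1))
    (Asymptotics.IsBigO.of_bound 1 ?_)
  -- `exp(-c n^α) ≤ n^(-2)` as soon as `2 log n ≤ c n^α`
  have hlog : ∀ᶠ x : ℝ in atTop, Real.log x ≤ c / 2 * x ^ α := by
    filter_upwards [(isLittleO_log_rpow_atTop hα).bound (half_pos hc),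
      eventually_ge_atTop 0] with x hx hx0
    simpa [abs_of_nonneg (Real.rpow_nonneg hx0 α)] using (le_abs_self _).trans hx
  filter_upwards [tendsto_natCast_atTop_atTop.eventually hlog, eventually_ge_atTop 1]
    with n hn hn1
  have hn0 : (0 : ℝ) < n := by exact_mod_cast hn1
  rw [one_mul, Real.norm_of_nonneg (Real.exp_nonneg _),
    Real.norm_of_nonneg (Real.rpow_nonneg hn0.le _), Real.rpow_def_of_pos hn0 (-2)]
  exact Real.exp_le_exp.mpr (by linarith)

lemma summable_int_exp_neg_mul_abs_rpow {c α : ℝ} (hc : 0 < c) (hα : 0 < α) :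
    Summable fun m : ℤ => Real.exp (-(c * |(m : ℝ)| ^ α)) := by
  have h := summable_nat_exp_neg_mul_rpow hc hα
  exact Summable.of_nat_of_neg (h.congr fun n => by simp) (h.congr fun n => by simp)

lemma hasSum_pi_prod {A : Type*} {φ : A → ℝ} (hφ0 : 0 ≤ φ) (hφ : Summable φ) (n : ℕ) :
    HasSum (fun v : Fin n → A => ∏ i, φ (v i)) ((∑' a, φ a) ^ n) := by
  induction n with
  | zero => simp
  | succ n ih =>
    set ψ : (Fin n → A) → ℝ := fun v => ∏ i, φ (v i)
    have hψ0 : 0 ≤ ψ := fun v => Finset.prod_nonneg fun i _ => hφ0 (v i)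
    have hprod : HasSum (fun p : A × (Fin n → A) => φ p.1 * ψ p.2)
        ((∑' a, φ a) * (∑' a, φ a) ^ n) :=
      HasSum.mul (f := φ) (g := ψ) hφ.hasSum ih (hφ.mul_of_nonneg ih.summable hφ0 hψ0)
    rw [pow_succ']
    refine (Fin.consEquiv fun _ => A).hasSum_iff.mp (hprod.congr_fun fun p => ?_)
    simp [ψ, Fin.consEquiv, Fin.prod_univ_succ]

def stepWeight {d : ℕ} (α c : ℝ) (y : Fin d → ℤ) : ℝ :=
  Real.exp (-(c * l1 (fun j => (y j : ℝ)) ^ α))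

lemma summable_stepWeight {d : ℕ} {α c : ℝ} (hα : 0 < α) (hc : 0 < c) :
    Summable (stepWeight (d := d) α c) := by
  -- dominate by a product of one-dimensional weights; `d + 1` rather than `d` covers `d = 0`
  have hd : (0 : ℝ) < d + 1 := by positivity
  have hprod := (hasSum_pi_prod (fun m => Real.exp_nonneg _)
    (summable_int_exp_neg_mul_abs_rpow (div_pos hc hd) hα) d).summable
  refine hprod.of_nonneg_of_le (fun y => Real.exp_nonneg _) fun y => ?_
  rw [stepWeight, ← Real.exp_sum, Real.exp_le_exp, Finset.sum_neg_distrib, neg_le_neg_iff,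
    ← Finset.mul_sum]
  calc c / (d + 1) * ∑ j, |(y j : ℝ)| ^ α ≤ c / (d + 1) * (d * l1 (fun j => (y j : ℝ)) ^ α) :=
        mul_le_mul_of_nonneg_left (sum_abs_rpow_le_mul_l1_rpow hα.le _) (by positivity)
    _ = c * l1 (fun j => (y j : ℝ)) ^ α * (d / (d + 1)) := by ring
    _ ≤ c * l1 (fun j => (y j : ℝ)) ^ α :=
        mul_le_of_le_one_right (mul_nonneg hc.le (Real.rpow_nonneg (l1_nonneg _) α))
          ((div_le_one hd).mpr (by linarith))

lemma energyR_eq_sum_fin {d : ℕ} (α : ℝ) (n : ℕ) (γ : ℕ → (Fin d → ℝ)) :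
    energyR α n γ = ∑ i : Fin n, l1 (γ (i + 1) - γ i) ^ α := by
  have hshift := Finset.sum_Ico_add' (fun i => l1 (γ i - γ (i - 1)) ^ α) 0 n 1
  simp only [Nat.add_sub_cancel, zero_add, Finset.Ico_add_one_right_eq_Icc] at hshift
  rw [energyR, Fin.sum_univ_eq_sum_range (fun i => l1 (γ (i + 1) - γ i) ^ α), Finset.range_eq_Ico,
    hshift]

lemma PathR.apply_mem_intPts {d n : ℕ} (g : PathR d (intPts d) n) {i : ℕ} (hi : i ≤ n) :
    g.1 i ∈ intPts d := by
  rcases Nat.eq_zero_or_pos i with rfl | hi0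
  · exact ⟨0, by rw [g.2.1]; funext j; simp⟩
  · exact g.2.2.1 i (Finset.mem_Icc.mpr ⟨hi0, hi⟩)

def increments {d : ℕ} (n : ℕ) (γ : ℕ → (Fin d → ℝ)) : Fin n → Fin d → ℤ :=
  fun i j => ⌊γ (i + 1) j - γ i j⌋

lemma cast_increments {d n : ℕ} (g : PathR d (intPts d) n) (i : Fin n) :
    (fun j => (increments n g.1 i j : ℝ)) = g.1 (i + 1) - g.1 i := by
  obtain ⟨z, hz⟩ := g.apply_mem_intPts (Nat.succ_le_of_lt i.2)
  obtain ⟨z', hz'⟩ := g.apply_mem_intPts i.2.le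
  funext j
  simp only [increments, hz, hz', Pi.sub_apply, ← Int.cast_sub, Int.floor_intCast]

lemma increments_injective {d n : ℕ} :
    Function.Injective fun g : PathR d (intPts d) n => increments n g.1 := by
  intro g h (hgh : increments n g.1 = increments n h.1)
  have hstep : ∀ i (hi : i < n), g.1 (i + 1) - g.1 i = h.1 (i + 1) - h.1 i := fun i hi => by
    rw [← cast_increments g ⟨i, hi⟩, ← cast_increments h ⟨i, hi⟩, hgh]
  have hle : ∀ i ≤ n, g.1 i = h.1 i := by
    intro i hi
    induction i with
    | zero => rw [g.2.1, h.2.1]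
    | succ i ih =>
      have := hstep i hi
      rw [ih (by omega)] at this
      simpa using this
  refine Subtype.ext (funext fun i => ?_)
  rcases le_or_gt i n with hi | hi
  · exact hle i hi
  · rw [g.2.2.2 i hi, h.2.2.2 i hi]

lemma exp_neg_mul_energyR_eq_prod {d n : ℕ} (α c : ℝ) (g : PathR d (intPts d) n) :
    Real.exp (-(c * energyR α n g.1)) = ∏ i, stepWeight α c (increments n g.1 i) := by
  simp only [energyR_eq_sum_fin, stepWeight, cast_increments, Finset.mul_sum,
    ← Finset.sum_neg_distrib, Real.exp_sum]

lemma summable_exp_neg_mul_energyR {d : ℕ} {α c : ℝ} (hα : 0 < α) (hc : 0 < c) (n : ℕ) :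
    Summable fun g : PathR d (intPts d) n => Real.exp (-(c * energyR α n g.1)) := by
  simp only [exp_neg_mul_energyR_eq_prod]
  exact ((hasSum_pi_prod (fun _ => Real.exp_nonneg _) (summable_stepWeight hα hc) n).summable
    |>.comp_injective increments_injective :)

lemma tsum_exp_neg_mul_energyR_le {d : ℕ} {α c : ℝ} (hα : 0 < α) (hc : 0 < c) (n : ℕ) :
    ∑' g : PathR d (intPts d) n, Real.exp (-(c * energyR α n g.1))
      ≤ (∑' y, stepWeight (d := d) α c y) ^ n := by
  simp only [exp_neg_mul_energyR_eq_prod]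
  have h := hasSum_pi_prod (φ := stepWeight α c) (fun _ => Real.exp_nonneg _)
    (summable_stepWeight (d := d) hα hc) n
  rw [← h.tsum_eq]
  exact tsum_comp_le_tsum_of_inj h.summable
    (fun v => Finset.prod_nonneg fun i _ => Real.exp_nonneg _) increments_injective

lemma tsum_sub_tsum_ite_le {P : Type*} {E w : P → ℝ} {c : ℝ} (hc : 0 ≤ c) (K : ℝ)
    (hw0 : 0 ≤ w) (hwE : ∀ p, w p ≤ Real.exp (-(c * E p))) (hw : Summable w)
    (hs : Summable fun p => Real.exp (-(c / 2 * E p))) :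
    ∑' p, w p - ∑' p, (if E p ≤ K then w p else 0)
      ≤ Real.exp (-(c / 2 * K)) * ∑' p, Real.exp (-(c / 2 * E p)) := by
  have hwK : Summable fun p => if E p ≤ K then w p else 0 :=
    hw.of_nonneg_of_le (fun p => by split_ifs; exacts [hw0 p, le_rfl])
      fun p => by split_ifs; exacts [le_rfl, hw0 p]
  rw [← hw.tsum_sub hwK, ← tsum_mul_left]
  refine (hw.sub hwK).tsum_le_tsum (fun p => ?_) (hs.mul_left _)
  split_ifs with hEK
  · rw [sub_self]
    positivity
  · -- above the threshold, half of the energy pays for the factor `exp(-cK/2)`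
    rw [sub_zero, ← Real.exp_add]
    exact (hwE p).trans (Real.exp_le_exp.mpr (by nlinarith))

lemma eventually_pow_mul_exp_neg_le {M c γ : ℝ} (hM : 0 < M) (hc : 0 < c) (hγ : 0 < γ) :
    ∀ᶠ n : ℕ in atTop, M ^ n * Real.exp (-(c / 2 * (n : ℝ) ^ (1 + γ)))
      ≤ Real.exp (-(c / 4) * (n : ℝ) ^ (1 + γ)) := by
  filter_upwards [((tendsto_rpow_atTop hγ).comp tendsto_natCast_atTop_atTop).eventually_ge_atTop
    (4 * Real.log M / c), eventually_gt_atTop 0] with n hn hn0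
  have hn0' : (0 : ℝ) < n := by exact_mod_cast hn0
  have hlog : Real.log M ≤ c / 4 * (n : ℝ) ^ γ := by
    rw [Function.comp_apply, div_le_iff₀ hc] at hn
    linarith
  rw [← Real.exp_log hM, ← Real.exp_nat_mul, ← Real.exp_add, Real.exp_le_exp, Real.rpow_add hn0',
    Real.rpow_one]
  nlinarith [mul_le_mul_of_nonneg_left hlog hn0'.le]

section PartitionFunction

variable {d n : ℕ} {α c₁ c₂ : ℝ}

lemma pow_mul_tsum_sub_pow_mul_tsum_ite_le (hα : 0 < α) (hc₁ : 0 ≤ c₁) (hc₂ : 0 < c₂) (K : ℝ)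
    {w : PathR d (intPts d) n → ℝ} (hw0 : 0 ≤ w)
    (hwE : ∀ g, w g ≤ Real.exp (-(c₂ * energyR α n g.1))) :
    c₁ ^ n * ∑' g, w g - c₁ ^ n * ∑' g, (if energyR α n g.1 ≤ K then w g else 0)
      ≤ (c₁ * ∑' y, stepWeight (d := d) α (c₂ / 2) y) ^ n * Real.exp (-(c₂ / 2 * K)) := by
  have hw := (summable_exp_neg_mul_energyR hα hc₂ n).of_nonneg_of_le hw0 hwE
  rw [← mul_sub, mul_pow, mul_assoc]
  refine mul_le_mul_of_nonneg_left ?_ (pow_nonneg hc₁ n)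
  calc _ ≤ Real.exp (-(c₂ / 2 * K)) * ∑' g : PathR d (intPts d) n,
          Real.exp (-(c₂ / 2 * energyR α n g.1)) :=
        tsum_sub_tsum_ite_le hc₂.le K hw0 hwE hw (summable_exp_neg_mul_energyR hα (half_pos hc₂) n)
    _ ≤ Real.exp (-(c₂ / 2 * K)) * (∑' y, stepWeight (d := d) α (c₂ / 2) y) ^ n :=
        mul_le_mul_of_nonneg_left (tsum_exp_neg_mul_energyR_le hα (half_pos hc₂) n)
          (Real.exp_nonneg _)
    _ = _ := mul_comm _ _

lemma ZR_sub_ZRtilde_le (hα : 0 < α) (hc₁ : 0 ≤ c₁) (hc₂ : 0 < c₂) {β : ℝ} (hβ : β ≤ 0)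
    (ω : Set (ℕ × (Fin d → ℝ))) (K : ℝ) :
    ZR α c₁ c₂ β n (intPts d) ω - ZRtilde α c₁ c₂ β n (intPts d) ω K
      ≤ (c₁ * ∑' y, stepWeight (d := d) α (c₂ / 2) y) ^ n * Real.exp (-(c₂ / 2 * K)) := by
  refine pow_mul_tsum_sub_pow_mul_tsum_ite_le hα hc₁ hc₂ K (fun g => Real.exp_nonneg _) fun g => ?_
  have hβcount := mul_nonpos_of_nonpos_of_nonneg hβ (obstacleCount n ω g.1).cast_nonneg
  exact Real.exp_le_exp.mpr (by linarith)

lemma ZRneg_sub_ZRnegtilde_le (hα : 0 < α) (hc₁ : 0 ≤ c₁) (hc₂ : 0 < c₂)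
    (ω : Set (ℕ × (Fin d → ℝ))) (K : ℝ) :
    ZRneg α c₁ c₂ n (intPts d) ω - ZRnegtilde α c₁ c₂ n (intPts d) ω K
      ≤ (c₁ * ∑' y, stepWeight (d := d) α (c₂ / 2) y) ^ n * Real.exp (-(c₂ / 2 * K)) := by
  rw [ZRneg, ZRnegtilde]
  simp_rw [and_comm (a := obstacleCount n ω _ = 0), ite_and]
  refine pow_mul_tsum_sub_pow_mul_tsum_ite_le hα hc₁ hc₂ K (fun g => by positivity) fun g => ?_
  split_ifs
  exacts [le_rfl, Real.exp_nonneg _]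

end PartitionFunction

theorem restricted_partition_function_close_general (d : ℕ) (α : ℝ) (hα : 0 < α)
    (c₁ c₂ : ℝ) (hc₁ : 0 < c₁) (hc₂ : 0 < c₂) :
    ∃ θ₀ : ℝ, 0 < θ₀ ∧ ∀ θ ∈ Set.Ioo (0 : ℝ) θ₀,
      ∃ C₁ : ℝ, 0 < C₁ ∧ ∃ N : ℕ, ∀ n : ℕ, N < n → ∀ η : Env d,
        (∀ β : ℝ, β ≤ 0 →
          ZR α c₁ c₂ β n (intPts d) (omegaOf η)
              - ZRtilde α c₁ c₂ β n (intPts d) (omegaOf η) ((n : ℝ) ^ ((1 : ℝ) + 2 * α * θ))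
            ≤ Real.exp (-C₁ * (n : ℝ) ^ ((1 : ℝ) + 2 * α * θ))) ∧
        ZRneg α c₁ c₂ n (intPts d) (omegaOf η)
            - ZRnegtilde α c₁ c₂ n (intPts d) (omegaOf η) ((n : ℝ) ^ ((1 : ℝ) + 2 * α * θ))
          ≤ Real.exp (-C₁ * (n : ℝ) ^ ((1 : ℝ) + 2 * α * θ)) := by
  -- any `θ > 0` works: `(c₁ S)^n` is only exponential in `n`, while the cutoff is superlinear
  refine ⟨1, one_pos, fun θ hθ => ?_⟩
  have hS : 0 < ∑' y, stepWeight (d := d) α (c₂ / 2) y :=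
    (summable_stepWeight hα (half_pos hc₂)).tsum_pos (fun _ => Real.exp_nonneg _) 0 (Real.exp_pos _)
  have hγ : 0 < 2 * α * θ := by have := hθ.1; positivity
  obtain ⟨N, hN⟩ := eventually_atTop.mp (eventually_pow_mul_exp_neg_le (mul_pos hc₁ hS) hc₂ hγ)
  refine ⟨c₂ / 4, by positivity, N, fun n hn η => ⟨fun β hβ => ?_, ?_⟩⟩
  · exact (ZR_sub_ZRtilde_le hα hc₁.le hc₂ hβ _ _).trans (hN n hn.le)
  · exact (ZRneg_sub_ZRnegtilde_le hα hc₁.le hc₂ _ _).trans (hN n hn.le)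

/-- For every sufficiently small `θ > 0` there are `C₁ > 0` and `N`
such that for all `n > N`, all `β ∈ [−∞, 0]` and every environment `η`, the paths of
energy larger than `n^{1+2αθ}` contribute at most `exp(−C₁ n^{1+2αθ})` to the partition
function: `Z_n(ω) − Z̃_n(ω) ≤ exp(−C₁ n^{1+2αθ})`. -/
theorem restricted_partition_function_close (d : ℕ) (hd : 1 ≤ d) (α : ℝ) (hα : 0 < α)
    (c₁ c₂ : ℝ) (hc₁ : 0 < c₁) (hc₂ : 0 < c₂)
    (hnorm : ∑' y : Fin d → ℤ,
      c₁ * Real.exp (-(c₂ * (l1 (fun j => (y j : ℝ))) ^ α)) = 1) :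
    ∃ θ₀ : ℝ, 0 < θ₀ ∧ ∀ θ ∈ Set.Ioo (0 : ℝ) θ₀,
      ∃ C₁ : ℝ, 0 < C₁ ∧ ∃ N : ℕ, ∀ n : ℕ, N < n → ∀ η : Env d,
        (∀ β : ℝ, β ≤ 0 →
          ZR α c₁ c₂ β n (intPts d) (omegaOf η)
              - ZRtilde α c₁ c₂ β n (intPts d) (omegaOf η) ((n : ℝ) ^ ((1 : ℝ) + 2 * α * θ))
            ≤ Real.exp (-C₁ * (n : ℝ) ^ ((1 : ℝ) + 2 * α * θ))) ∧
        ZRneg α c₁ c₂ n (intPts d) (omegaOf η)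
            - ZRnegtilde α c₁ c₂ n (intPts d) (omegaOf η) ((n : ℝ) ^ ((1 : ℝ) + 2 * α * θ))
          ≤ Real.exp (-C₁ * (n : ℝ) ^ ((1 : ℝ) + 2 * α * θ)) :=
  restricted_partition_function_close_general d α hα c₁ c₂ hc₁ hc₂

end DPRE
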